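/- arXiv:1603.06483 — 9 statements merged into one kernel-verified Lean document; each statement's English description precedes it below -/
import Mathlib

section
/- Let E be a digraph on a finite vertex set containing no directed cycle of length 3 or more (self-loops excluded from cycles). Then: (a) for any two vertices u ≠ v lying in the same strongly connected component of E, if (u,v) ∈ E then (v,u) ∈ E, i.e., all interactions within a strongly connected component are reciprocal; and (b) the underlying undirected graph induced on each strongly connected component is acyclic, i.e., each strongly connected component is the symmetric closure of a tree. Consequently the network is a cascade (acyclic interconnection) of negative feedback chains. -/
/-- A digraph `E` contains a directed cycle of length `k ≥ 3`: a sequence of `k` distinct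
vertices `v 0, …, v (k-1)` with edges `v l → v (l+1)` (indices mod `k`). -/
def HasDirCycleGE3 {V : Type*} (E : V → V → Prop) : Prop :=
  ∃ k : ℕ, 3 ≤ k ∧ ∃ v : Fin k → V, Function.Injective v ∧
    ∀ l : Fin k, E (v l) (v (finRotate k l))

/-- The underlying undirected (simple) graph of a digraph `E`: `u` and `v` are adjacent iff
`u ≠ v` and there is an edge between them in some direction. -/
def underlyingGraph {V : Type*} (E : V → V → Prop) : SimpleGraph V where
  Adj u v := u ≠ v ∧ (E u v ∨ E v u)
  symm := by
    refine ⟨?_⟩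
    intro u v h
    exact ⟨h.1.symm, h.2.symm⟩
  loopless := by
    refine ⟨?_⟩
    intro u h
    exact h.1 rfl

-- AUX
lemma finRotate_val {k : ℕ} (i : Fin k) :
    ((finRotate k) i).val = if i.val + 1 = k then 0 else i.val + 1 := by
  match k, i with
  | (n+1), i =>
    rw [finRotate_succ_apply, Fin.val_add_one]
    have hlt := i.isLt
    by_cases h : i = Fin.last n
    · simp [h]
    · rw [if_neg h, if_neg (by simpa [Fin.ext_iff] using h)]

lemma cycle_of_list {V : Type*} {E : V → V → Prop} (L : List V) (h3 : 3 ≤ L.length)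
    (hnd : L.Nodup) (hchain : L.Chain' E)
    (hwrap : ∀ a ∈ L.getLast?, ∀ b ∈ L.head?, E a b) :
    HasDirCycleGE3 E := by
  have hLne : L ≠ [] := by rintro rfl; simp at h3
  have hwrap' : E (L.getLast hLne) (L.head hLne) :=
    hwrap _ (List.getLast?_eq_getLast hLne ▸ rfl) _ (List.head?_eq_head hLne ▸ rfl)
  refine ⟨L.length, h3, L.get, (List.nodup_iff_injective_get).1 hnd, ?_⟩
  intro i
  have hval := finRotate_val i
  by_cases h : i.val + 1 = L.length
  · -- i is the last index
    rw [if_pos h] at hval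
    have h2 : L.get i = L.getLast hLne := by
      rw [List.getLast_eq_getElem, List.get_eq_getElem]
      congr 1
      omega
    have h4 : L.get (finRotate L.length i) = L.head hLne := by
      rw [← List.get_mk_zero (by omega)]
      congr 1
      exact Fin.ext hval
    rw [h2, h4]
    exact hwrap'
  · rw [if_neg h] at hval
    have hlt := i.isLt
    have h2 : finRotate L.length i = ⟨i.val + 1, by omega⟩ := Fin.ext hval
    have := List.isChain_iff_getElem.1 hchain i (by omega)
    rw [h2]
    convert this using 2 <;> simp [List.get_eq_getElem]

lemma exists_walk {V : Type*} {E : V → V → Prop} {v u : V}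
    (h : Relation.ReflTransGen E v u) :
    ∃ w : List V, w.Chain' E ∧ w.head? = some v ∧ w.getLast? = some u := by
  induction h with
  | refl => exact ⟨[v], List.isChain_singleton v, by simp, by simp⟩
  | @tail b c hab hbc ih =>
    obtain ⟨w, h1, h2, h3⟩ := ih
    refine ⟨w ++ [c], ?_, ?_, ?_⟩
    · refine h1.append (by simp) ?_
      intro x hx y hy
      simp at hy
      rw [h3] at hx
      simp at hx
      rw [← hx, ← hy]
      exact hbc
    · rw [List.head?_append_of_ne_nil _ (by rintro rfl; simp at h2)]
      exact h2
    · simp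

lemma surgery {V : Type*} {E : V → V → Prop} {w : List V} (hch : w.Chain' E)
    {i j : ℕ} (hij : i < j) (hj : j < w.length)
    (heq : w[i]'(by omega) = w[j]'hj) :
    ∃ w' : List V, w'.Chain' E ∧ w'.head? = w.head? ∧ w'.getLast? = w.getLast? ∧
      w'.length < w.length := by
  have hi : i < w.length := by omega
  have hlt : (w.take (i+1)).getLast? = some (w[i]'hi) := by
    rw [List.getLast?_eq_getElem?, List.length_take]
    have : min (i+1) w.length = i + 1 := by omega
    rw [this]
    simp only [Nat.add_sub_cancel, List.getElem?_take_of_succ]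
    exact List.getElem?_eq_getElem hi
  have hwne : w ≠ [] := by intro h; rw [h] at hj; simp at hj
  have htne : w.take (i+1) ≠ [] := by
    rw [Ne, List.take_eq_nil_iff]
    simp [hwne]
  refine ⟨w.take (i+1) ++ w.drop (j+1), ?_, ?_, ?_, ?_⟩
  · refine (hch.take _).append (hch.drop _) ?_
    intro x hx y hy
    rw [hlt] at hx
    simp only [Option.mem_def, Option.some.injEq] at hx
    by_cases hd : j + 1 < w.length
    · rw [List.drop_eq_getElem_cons hd] at hy
      simp only [List.head?_cons, Option.mem_def, Option.some.injEq] at hy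
      rw [← hx, ← hy, heq]
      exact List.isChain_iff_getElem.1 hch j (by omega)
    · rw [List.drop_eq_nil_iff.2 (by omega)] at hy
      simp at hy
  · rw [List.head?_append_of_ne_nil _ htne]
    rw [List.head?_eq_getElem?, List.head?_eq_getElem?, List.getElem?_take_of_lt (by omega)]
  · by_cases hd : j + 1 < w.length
    · have hdn : w.drop (j+1) ≠ [] := by
        rw [Ne, List.drop_eq_nil_iff]
        omega
      rw [List.getLast?_append_of_ne_nil _ hdn]
      conv_rhs => rw [← List.take_append_drop (j+1) w]
      rw [List.getLast?_append_of_ne_nil _ hdn]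
    · rw [List.drop_eq_nil_iff.2 (by omega), List.append_nil, hlt,
        List.getLast?_eq_getElem?]
      have h5 : w.length - 1 = j := by omega
      rw [h5, heq]
      exact (List.getElem?_eq_getElem hj).symm
  · rw [List.length_append, List.length_take, List.length_drop]
    omega

lemma recip {V : Type*} {E : V → V → Prop} (hcyc : ¬ HasDirCycleGE3 E)
    {u v : V} (hne : u ≠ v) (he : E u v) (hpath : Relation.ReflTransGen E v u) :
    E v u := by
  obtain ⟨w0, hch0, hh0, hl0⟩ := exists_walk hpath
  clear hpath
  have key : ∀ n (w : List V), w.length = n → w.Chain' E → w.head? = some v →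
      w.getLast? = some u → E v u := by
    intro n
    induction n using Nat.strong_induction_on with
    | _ n ih =>
      intro w hlen hch hh hl
      by_cases hnd : w.Nodup
      · -- no duplicates: either short walk or a directed cycle
        have hwne : w ≠ [] := by rintro rfl; simp at hh
        have hlen1 : w.length ≠ 1 := by
          intro h1
          obtain ⟨a, rfl⟩ := List.length_eq_one_iff.1 h1
          simp at hh hl
          exact hne (hl.symm.trans hh)
        have hlen2 : 2 ≤ w.length := by
          have := List.length_pos_iff.2 hwne
          omega
        rcases eq_or_lt_of_le hlen2 with h2 | h3
        · -- walk of length 2 : direct edge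
          obtain ⟨a, b, rfl⟩ := List.length_eq_two.1 h2.symm
          simp at hh hl
          subst hh; subst hl
          exact List.isChain_pair.1 hch
        · -- length ≥ 3 : build a directed cycle, contradiction
          exfalso
          have hw : w.dropLast ++ [u] = w := List.dropLast_append_getLast? u hl
          have hdne : w.dropLast ≠ [] := by
            intro h
            rw [← hw, h] at h3
            simp at h3
          set L : List V := u :: w.dropLast with hL
          have h3' : 3 ≤ L.length := by
            rw [hL]
            simp [List.length_dropLast]
            omega
          apply hcyc
          refine cycle_of_list L h3' ?_ ?_ ?_
          · rw [hL, List.nodup_cons]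
            rw [← hw] at hnd
            have := List.nodup_append.1 hnd
            refine ⟨fun hmem => ?_, this.1⟩
            exact this.2.2 u hmem u (by simp) rfl
          · rw [hL]
            refine List.isChain_cons.2 ⟨?_, hch.dropLast⟩
            intro y hy
            rw [List.head?_dropLast, if_pos (by omega), hh] at hy
            simp at hy
            rw [← hy]
            exact he
          · intro a ha b hb
            have hb' : b = u := by
              rw [hL] at hb
              simpa using hb.symm
            obtain ⟨hne9, ha'⟩ := List.mem_getLast?_eq_getLast ha
            have ha'' : a = w.dropLast.getLast hdne :=
              ha'.trans (List.getLast_cons hdne)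
            rw [ha'', hb']
            have hch' := hch
            rw [← hw] at hch'
            exact (List.isChain_append.1 hch').2.2 _
              (List.getLast?_eq_getLast hdne ▸ rfl) u rfl
      · -- duplicates : shorten the walk
        rw [List.nodup_iff_injective_get] at hnd
        obtain ⟨a, b, hab, hne'⟩ := Function.not_injective_iff.1 hnd
        have surg : ∃ w' : List V, w'.Chain' E ∧ w'.head? = w.head? ∧
            w'.getLast? = w.getLast? ∧ w'.length < w.length := by
          rcases lt_or_gt_of_ne hne' with h | h
          · exact surgery hch (i := a.val) (j := b.val) h b.isLt
              (by simpa [List.get_eq_getElem] using hab)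
          · exact surgery hch (i := b.val) (j := a.val) h a.isLt
              (by simpa [List.get_eq_getElem] using hab.symm)
        obtain ⟨w', hch', hh', hl', hlt'⟩ := surg
        exact ih w'.length (by omega) w' rfl hch' (hh'.trans hh) (hl'.trans hl)
  exact key w0.length w0 rfl hch0 hh0 hl0

lemma part_b {V : Type*} {E : V → V → Prop} (hcyc : ¬ HasDirCycleGE3 E) (w : V) :
    (SimpleGraph.induce
      {u : V | Relation.ReflTransGen E w u ∧ Relation.ReflTransGen E u w}
      (underlyingGraph E)).IsAcyclic := by
  intro x p hp
  have upgrade : ∀ a b : ↥{u : V | Relation.ReflTransGen E w u ∧ Relation.ReflTransGen E u w},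
      (underlyingGraph E).Adj a.val b.val → E a.val b.val := by
    intro a b hab
    rcases hab.2 with h | h
    · exact h
    · exact recip hcyc hab.1.symm h (a.2.2.trans b.2.1)
  have htne : p.support.tail ≠ [] := by
    intro h
    have h1 := p.support_eq_cons
    rw [h] at h1
    have h2 := p.length_support
    rw [h1] at h2
    simp only [List.length_cons, List.length_nil] at h2
    have h3 := hp.three_le_length
    omega
  apply hcyc
  refine cycle_of_list (p.support.tail.map Subtype.val) ?_ ?_ ?_ ?_
  · rw [List.length_map, List.length_tail, p.length_support]
    have := hp.three_le_length
    omega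
  · exact hp.support_nodup.map Subtype.val_injective
  · refine (List.isChain_map _).2 ?_
    refine ((p.isChain_adj_support).tail).imp ?_
    intro a b hab
    exact upgrade a b (by simpa using hab)
  · intro a ha b hb
    rw [List.getLast?_map, List.getLast?_eq_getLast htne] at ha
    rw [List.head?_map, List.head?_eq_head htne] at hb
    simp only [Option.map_some, Option.mem_def, Option.some.injEq] at ha hb
    have hlast0 : p.support.tail.getLast htne = x := by
      rw [List.getLast_tail]
      exact p.getLast_support
    have hedge : (SimpleGraph.induce
        {u : V | Relation.ReflTransGen E w u ∧ Relation.ReflTransGen E u w}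
        (underlyingGraph E)).Adj x (p.support.tail.head htne) := by
      have hch2 := p.isChain_adj_support
      rw [p.support_eq_cons] at hch2
      exact (List.isChain_cons.1 hch2).1 (p.support.tail.head htne)
        (List.head?_eq_head htne ▸ rfl)
    rw [← ha, ← hb, hlast0]
    exact upgrade x (p.support.tail.head htne) (by simpa using hedge)

/-- Proposition 2 (structure of sign-stable networks): if a digraph `E` on a finite vertex
set has no directed cycle of length 3 or more, then (a) within a strongly connected
component all interactions are reciprocal, and (b) the underlying undirected graph induced
on each strongly connected component is acyclic (each component is the symmetric closure of
a tree); hence the network is a cascade of negative feedback chains. -/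
theorem no_long_cycles_structure
    {V : Type*} [Fintype V] (E : V → V → Prop)
    (hcyc : ¬ HasDirCycleGE3 E) :
    -- (a) interactions inside a strongly connected component are reciprocal
    (∀ u v : V, u ≠ v →
      Relation.ReflTransGen E u v → Relation.ReflTransGen E v u → E u v → E v u) ∧
    -- (b) the undirected graph induced on each strongly connected component is acyclic
    (∀ w : V,
      (SimpleGraph.induce
        {u : V | Relation.ReflTransGen E w u ∧ Relation.ReflTransGen E u w}
        (underlyingGraph E)).IsAcyclic) := by
  exact ⟨fun u v hne _ hvu he => recip hcyc hne he hvu, fun w => part_b hcyc w⟩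
end

section
/- Let E be a digraph on a finite vertex set and let S₁, S₂ be disjoint sets of vertices, each of which is strongly connected within E (for any two vertices of S_k there is a directed path in E between them staying in S_k). Suppose there exist an edge (a,b) ∈ E with a ∈ S₁, b ∈ S₂ and an edge (c,d) ∈ E with c ∈ S₂, d ∈ S₁, such that (a,b) and (d,c) are not the same ordered pair (i.e., it is not the case that a = d and b = c). Then E contains a directed cycle of length 3 or more. Consequently, two feedback chains can be interconnected without creating a cycle of length 3 or more only through a single two-node feedback pair or in cascade (all connecting edges going in one direction). -/
lemma exists_nodup_chain_of_rtg {α : Type*} {r : α → α → Prop} {a b : α}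
    (h : Relation.ReflTransGen r a b) :
    ∃ l : List α, List.Chain r a l ∧ (a :: l).getLast? = some b ∧
      (a :: l).Nodup := by
  refine Relation.ReflTransGen.head_induction_on h ?_ ?_
  · exact ⟨[], List.Chain.nil, rfl, List.nodup_singleton _⟩
  · intro x c hxc _ ih
    obtain ⟨l, hl₁, hl₂, hl₃⟩ := ih
    by_cases hx : x ∈ c :: l
    · obtain ⟨s, t, hst⟩ := List.append_of_mem hx
      have hsuf : (x :: t) <:+ (c :: l) := ⟨s, hst.symm⟩
      refine ⟨t, ?_, ?_, hl₃.sublist hsuf.sublist⟩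
      · have hch : List.Chain' r (c :: l) := hl₁
        exact (hch.suffix hsuf)
      · rw [← hl₂, hst, List.getLast?_append_of_ne_nil _ (List.cons_ne_nil _ _)]
    · exact ⟨c :: l, List.Chain.cons hxc hl₁,
        by rw [← hl₂]; exact (List.getLast?_cons_cons ..).symm ▸ rfl,
        List.nodup_cons.2 ⟨hx, hl₃⟩⟩

lemma hasDirCycle_aux {V : Type*} (E : V → V → Prop) (n : ℕ) (f : Fin (n+1) → V)
    (h3 : 3 ≤ n + 1) (hinj : Function.Injective f)
    (hs : ∀ i : Fin n, E (f i.castSucc) (f i.succ))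
    (hw : E (f (Fin.last n)) (f 0)) : HasDirCycleGE3 E := by
  refine ⟨n+1, h3, f, hinj, fun l => ?_⟩
  rw [finRotate_succ_apply]
  rcases eq_or_ne l (Fin.last n) with rfl | hl
  · rwa [Fin.last_add_one]
  · obtain ⟨i, rfl⟩ := Fin.exists_castSucc_eq.2 hl
    rw [Fin.coeSucc_eq_succ]
    exact hs i

lemma hasDirCycle_of_list {V : Type*} (E : V → V → Prop) (L : List V) (h3 : 3 ≤ L.length)
    (hnd : L.Nodup) (hch : List.Chain' E L)
    (hne : L ≠ [])
    (hwrap : E (L.getLast hne) (L.head hne)) : HasDirCycleGE3 E := by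
  obtain ⟨n, hn⟩ : ∃ n, L.length = n + 1 := ⟨L.length - 1, by omega⟩
  refine hasDirCycle_aux E n (fun i => L.get (i.cast hn.symm)) (by omega) ?_ ?_ ?_
  · intro i j hij
    have := List.nodup_iff_injective_get.1 hnd hij
    have := congrArg Fin.val this
    simpa [Fin.ext_iff] using this
  · intro i
    have := List.isChain_iff_getElem.1 hch (i : ℕ) (by omega)
    convert this using 3 <;> simp
  · have h1 : L.get ((Fin.last n).cast hn.symm) = L.getLast hne := by
      rw [List.getLast_eq_getElem]; simp [hn]
    have h2 : L.get ((0 : Fin (n+1)).cast hn.symm) = L.head hne := by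
      rw [List.head_eq_getElem_zero hne]; simp
    show E (L.get ((Fin.last n).cast hn.symm)) (L.get ((0 : Fin (n+1)).cast hn.symm))
    rw [h1, h2]; exact hwrap

lemma chain_mem_set {V : Type*} {S : Set V} {r : V → V → Prop}
    (hr : ∀ p q, r p q → q ∈ S) {a : V} {l : List V} (h : List.Chain r a l) (ha : a ∈ S) :
    ∀ x ∈ a :: l, x ∈ S := by
  induction l generalizing a with
  | nil => simpa using ha
  | cons y t ih =>
    rcases h with _ | _ | ⟨hay, hyt⟩
    intro x hx
    rcases List.mem_cons.1 hx with rfl | hx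
    · exact ha
    · exact ih hyt (hr _ _ hay) x hx

/-- Lemma 2: let `S₁, S₂` be disjoint vertex sets, each strongly connected within the
digraph `E` (directed paths staying inside the set). If there is an edge `(a,b)` from `S₁`
to `S₂` and an edge `(c,d)` from `S₂` to `S₁` which are not one and the same reciprocal
pair (i.e. not `a = d` and `b = c`), then `E` has a directed cycle of length 3 or more.
Hence two feedback chains can be interconnected without creating long cycles only via a
single two-node feedback pair, or in cascade. -/
theorem interconnection_of_chains_creates_long_cycle
    {V : Type*} [Fintype V] (E : V → V → Prop)
    (S₁ S₂ : Set V) (hdisj : Disjoint S₁ S₂)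
    (h₁ : ∀ u ∈ S₁, ∀ v ∈ S₁,
      Relation.ReflTransGen (fun p q => E p q ∧ p ∈ S₁ ∧ q ∈ S₁) u v)
    (h₂ : ∀ u ∈ S₂, ∀ v ∈ S₂,
      Relation.ReflTransGen (fun p q => E p q ∧ p ∈ S₂ ∧ q ∈ S₂) u v)
    (a b c d : V) (haS : a ∈ S₁) (hbS : b ∈ S₂) (hcS : c ∈ S₂) (hdS : d ∈ S₁)
    (hab : E a b) (hcd : E c d)
    (hne : ¬ (a = d ∧ b = c)) :
    HasDirCycleGE3 E := by
  obtain ⟨l₁, hc₁, hg₁, hn₁⟩ := exists_nodup_chain_of_rtg (h₁ d hdS a haS)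
  obtain ⟨l₂, hc₂, hg₂, hn₂⟩ := exists_nodup_chain_of_rtg (h₂ b hbS c hcS)
  have hmem₁ : ∀ x ∈ d :: l₁, x ∈ S₁ :=
    chain_mem_set (fun p q h => h.2.2) hc₁ hdS
  have hmem₂ : ∀ x ∈ b :: l₂, x ∈ S₂ :=
    chain_mem_set (fun p q h => h.2.2) hc₂ hbS
  set L : List V := (d :: l₁) ++ (b :: l₂) with hL
  have hneL : L ≠ [] := by simp [hL]
  have hnd : L.Nodup := by
    refine List.Nodup.append hn₁ hn₂ ?_
    intro x hx₁ hx₂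
    exact Set.disjoint_left.1 hdisj (hmem₁ x hx₁) (hmem₂ x hx₂)
  have hch : List.Chain' E L := by
    refine List.isChain_append.2 ⟨?_, ?_, ?_⟩
    · exact (List.IsChain.imp (fun p q h => h.1) hc₁ : List.Chain E d l₁)
    · exact (List.IsChain.imp (fun p q h => h.1) hc₂ : List.Chain E b l₂)
    · intro x hx y hy
      rw [hg₁] at hx
      rw [List.head?_cons] at hy
      obtain rfl : x = a := by simpa using hx.symm
      obtain rfl : y = b := by simpa using hy.symm
      exact hab
  have h3 : 3 ≤ L.length := by
    rcases l₁ with _ | ⟨x, t⟩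
    · rcases l₂ with _ | ⟨y, u⟩
      · exfalso
        apply hne
        constructor
        · simpa using hg₁.symm
        · simpa using hg₂
      · simp only [hL, List.length_append, List.length_cons]; omega
    · simp only [hL, List.length_append, List.length_cons]; omega
  have hlast : L.getLast hneL = c := by
    have : L.getLast? = some c := by
      rw [hL, List.getLast?_append_of_ne_nil _ (List.cons_ne_nil _ _)]
      exact hg₂
    rw [List.getLast?_eq_getLast_of_ne_nil hneL] at this
    exact Option.some_injective _ this
  have hhead : L.head hneL = d := by simp [hL]
  exact hasDirCycle_of_list E L h3 hnd hch hneL (by rw [hlast, hhead]; exact hcd)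
end

section
/- Fix i ≥ 1. Let A_i : ℝ → Matrix i×i ℝ, let D_i : ℝ → Matrix i×i ℝ be a differentiable diagonal matrix function whose i-th (last) diagonal entry is d_{ii}(t) > 0, let a, b, α : ℝ → ℝ with b differentiable, and let e_i = (0,…,0,1)ᵀ ∈ ℝⁱ. Define the (i+1)×(i+1) block matrices A_{i+1}(t) = [[A_i(t), −b(t)a(t)·e_i], [a(t)·e_iᵀ, −α(t)]] and D_{i+1}(t) = [[D_i(t), 0], [0, d_{ii}(t)·b(t)]]. Then for every t, D'_{i+1}(t) + A_{i+1}(t)ᵀD_{i+1}(t) + D_{i+1}(t)A_{i+1}(t) = [[D'_i(t) + A_i(t)ᵀD_i(t) + D_i(t)A_i(t), 0], [0, −2α(t)·d_{ii}(t)·b(t) + (d_{ii}·b)'(t)]], i.e., the cross terms induced by attaching the new node in negative feedback cancel exactly and L(A_{i+1}, D_{i+1}) is block diagonal with blocks L(A_i, D_i) and the scalar −2α d_{ii} b + (d_{ii} b)'. -/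
open Matrix

/-- Recursive construction of the diagonal metric for feedback chains (inductive step of
Proposition 1): attaching a new node to the `i`-th (last) node of a chain by a negative
feedback pair with interaction `a`, asymmetry `b` and self-loop `-α`, and extending the
diagonal metric `D` by the entry `d_{ii} b`, the matrix `L(A_{i+1}, D_{i+1})` is block
diagonal with blocks `L(A_i, D_i)` and the scalar `-2 α d_{ii} b + (d_{ii} b)'`. -/
theorem feedback_chain_recursive_metric_step
    (i : ℕ) (hi : 1 ≤ i)
    (A D : ℝ → Matrix (Fin i) (Fin i) ℝ)
    (hDdiag : ∀ t, ∀ r c : Fin i, r ≠ c → D t r c = 0)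
    (hDdiff : ∀ r c : Fin i, Differentiable ℝ (fun t => D t r c))
    (a b α : ℝ → ℝ) (hbdiff : Differentiable ℝ b)
    (last : Fin i) (hlast : (last : ℕ) = i - 1)
    (hdpos : ∀ t, 0 < D t last last)
    (e : Fin i → ℝ) (he : e = Pi.single last 1)
    (A' D' : ℝ → Matrix (Fin i ⊕ Fin 1) (Fin i ⊕ Fin 1) ℝ)
    (hA' : ∀ t, A' t = Matrix.fromBlocks (A t)
      (Matrix.of fun r _ => -(b t * a t) * e r)
      (Matrix.of fun _ c => a t * e c)
      (Matrix.of fun _ _ => -α t))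
    (hD' : ∀ t, D' t = Matrix.fromBlocks (D t) 0 0
      (Matrix.of fun _ _ => D t last last * b t)) :
    ∀ t : ℝ,
      (Matrix.of fun p q => deriv (fun s => D' s p q) t) + (A' t)ᵀ * D' t + D' t * A' t
        = Matrix.fromBlocks
            ((Matrix.of fun r c => deriv (fun s => D s r c) t) + (A t)ᵀ * D t + D t * A t)
            0 0
            (Matrix.of fun _ _ =>
              -2 * α t * (D t last last * b t) + deriv (fun s => D s last last * b s) t) := by
  intro t
  ext p q
  have hDfun : ∀ (r c : Fin i), (fun s => D' s (Sum.inl r) (Sum.inl c)) = fun s => D s r c := by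
    intro r c; funext s; rw [hD']; rfl
  have hDfun2 : ∀ (r : Fin 1) (c : Fin i), (fun s => D' s (Sum.inr r) (Sum.inl c)) = fun _ => (0:ℝ) := by
    intro r c; funext s; rw [hD']; rfl
  have hDfun3 : ∀ (r : Fin i) (c : Fin 1), (fun s => D' s (Sum.inl r) (Sum.inr c)) = fun _ => (0:ℝ) := by
    intro r c; funext s; rw [hD']; rfl
  have hDfun4 : ∀ (r c : Fin 1), (fun s => D' s (Sum.inr r) (Sum.inr c)) = fun s => D s last last * b s := by
    intro r c; funext s; rw [hD']; rfl
  rcases p with r | r <;> rcases q with c | c <;>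
    simp only [Matrix.add_apply, Matrix.of_apply, Matrix.mul_apply, hA', hD',
      Matrix.fromBlocks_apply₁₁, Matrix.fromBlocks_apply₁₂, Matrix.fromBlocks_apply₂₁,
      Matrix.fromBlocks_apply₂₂, Matrix.transpose_apply, Fintype.sum_sum_type,
      hDfun, hDfun2, hDfun3, hDfun4, Matrix.zero_apply, deriv_const]
  · simp
  · simp only [he, Pi.single_apply, mul_zero, zero_mul, Finset.sum_const_zero, add_zero,
      zero_add, mul_ite, mul_one, Fin.sum_univ_one, Finset.sum_ite_eq', Finset.mem_univ,
      if_true]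
    rcases eq_or_ne r last with rfl | h
    · simp; ring
    · simp [h, hDdiag t r last h]
  · simp only [he, Pi.single_apply, mul_zero, zero_mul, Finset.sum_const_zero, add_zero,
      zero_add, mul_ite, mul_one, ite_mul, one_mul, Fin.sum_univ_one, Finset.sum_ite_eq',
      Finset.mem_univ, if_true]
    rcases eq_or_ne c last with rfl | h
    · simp; ring
    · simp [h, hDdiag t last c (Ne.symm h)]
  · simp
    ring
end

section
/- Let A : ℝ → Matrix n×n ℝ be continuous and let M : ℝ → Matrix n×n ℝ be a continuously differentiable symmetric matrix function for which there exist constants 0 < m ≤ m̄ and λ > 0 such that for all t and all ξ ∈ ℝⁿ: m·‖ξ‖² ≤ ξᵀM(t)ξ ≤ m̄·‖ξ‖² and ξᵀ(M'(t) + A(t)ᵀM(t) + M(t)A(t))ξ ≤ −2λ·ξᵀM(t)ξ. Then every solution x : [t₀,∞) → ℝⁿ of the linear time-varying system ẋ(t) = A(t)x(t) satisfies ‖x(t)‖ ≤ √(m̄/m)·e^{−λ(t−t₀)}·‖x(t₀)‖ for all t ≥ t₀. -/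
open Matrix

private lemma dot_key {n : ℕ} (A M Md : Matrix (Fin n) (Fin n) ℝ) (x : Fin n → ℝ) :
    (A *ᵥ x) ⬝ᵥ (M *ᵥ x) + x ⬝ᵥ (Md *ᵥ x) + x ⬝ᵥ (M *ᵥ (A *ᵥ x))
      = x ⬝ᵥ ((Md + Aᵀ * M + M * A) *ᵥ x) := by
  rw [Matrix.add_mulVec, Matrix.add_mulVec, dotProduct_add, dotProduct_add,
    ← Matrix.mulVec_mulVec, ← Matrix.mulVec_mulVec,
    Matrix.dotProduct_mulVec x Aᵀ, Matrix.vecMul_transpose]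
  ring

/-- Basic contraction tool: a uniformly positive definite metric `M t` with
`M' + Aᵀ M + M A ≤ -2 λ M` (as quadratic forms) implies exponential stability of the
linear time-varying system `ẋ = A t x`, with overshoot `√(m̄ / m)` and rate `λ`.
Here `‖ξ‖² = ξ ⬝ᵥ ξ` is the squared Euclidean norm. -/
theorem contraction_metric_exponential_stability
    (n : ℕ) (A M : ℝ → Matrix (Fin n) (Fin n) ℝ)
    (hA : ∀ i j, Continuous fun t => A t i j)
    (hM : ∀ i j, ContDiff ℝ 1 fun t => M t i j)
    (hMsymm : ∀ t, (M t).IsSymm)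
    (m mbar lam : ℝ) (hm : 0 < m) (hmmbar : m ≤ mbar) (hlam : 0 < lam)
    (hlow : ∀ t (ξ : Fin n → ℝ), m * (ξ ⬝ᵥ ξ) ≤ ξ ⬝ᵥ (M t *ᵥ ξ))
    (hup : ∀ t (ξ : Fin n → ℝ), ξ ⬝ᵥ (M t *ᵥ ξ) ≤ mbar * (ξ ⬝ᵥ ξ))
    (hcontr : ∀ t (ξ : Fin n → ℝ),
      ξ ⬝ᵥ (((Matrix.of fun i j => deriv (fun s => M s i j) t) + (A t)ᵀ * M t + M t * A t) *ᵥ ξ)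
        ≤ -2 * lam * (ξ ⬝ᵥ (M t *ᵥ ξ)))
    (t₀ : ℝ) (x : ℝ → Fin n → ℝ)
    (hx : ∀ t, t₀ ≤ t → HasDerivAt x (A t *ᵥ x t) t) :
    ∀ t, t₀ ≤ t →
      Real.sqrt (x t ⬝ᵥ x t)
        ≤ Real.sqrt (mbar / m) * Real.exp (-lam * (t - t₀)) * Real.sqrt (x t₀ ⬝ᵥ x t₀) := by
  set Md : ℝ → Matrix (Fin n) (Fin n) ℝ :=
    fun t => Matrix.of fun i j => deriv (fun s => M s i j) t with hMd
  set V : ℝ → ℝ := fun s => x s ⬝ᵥ (M s *ᵥ x s) with hV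
  -- derivative of V
  have hVderiv : ∀ t, t₀ ≤ t →
      HasDerivAt V (x t ⬝ᵥ ((Md t + (A t)ᵀ * M t + M t * A t) *ᵥ x t)) t := by
    intro t ht
    have hxi : ∀ i, HasDerivAt (fun s => x s i) ((A t *ᵥ x t) i) t :=
      hasDerivAt_pi.1 (hx t ht)
    have hMij : ∀ i j, HasDerivAt (fun s => M s i j) (Md t i j) t := fun i j =>
      ((hM i j).differentiable one_ne_zero t).hasDerivAt
    have hterm : ∀ i ∈ Finset.univ, HasDerivAt
        (fun s => x s i * ((fun j => M s i j * x s j) |> fun f => ∑ j, f j))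
        ((A t *ᵥ x t) i * (∑ j, M t i j * x t j)
          + x t i * (∑ j, (Md t i j * x t j + M t i j * (A t *ᵥ x t) j))) t := by
      intro i _
      exact (hxi i).mul (HasDerivAt.fun_sum fun j _ => (hMij i j).mul (hxi j))
    have h1 : HasDerivAt V
        ((A t *ᵥ x t) ⬝ᵥ (M t *ᵥ x t) + x t ⬝ᵥ (Md t *ᵥ x t)
          + x t ⬝ᵥ (M t *ᵥ (A t *ᵥ x t))) t := by
      have h : HasDerivAt V _ t := HasDerivAt.fun_sum hterm
      convert h using 1
      simp only [dotProduct, Matrix.mulVec, dotProduct]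
      rw [← Finset.sum_add_distrib, ← Finset.sum_add_distrib]
      refine Finset.sum_congr rfl fun i _ => ?_
      rw [Finset.sum_add_distrib, mul_add]
      ring
    rw [← dot_key]
    exact h1
  -- the Lyapunov-type decay
  have hVdecay : ∀ t, t₀ ≤ t → V t ≤ V t₀ * Real.exp (-2 * lam * (t - t₀)) := by
    intro t ht
    set g : ℝ → ℝ := fun s => V s * Real.exp (2 * lam * (s - t₀)) with hg
    have hgderiv : ∀ s, t₀ ≤ s → HasDerivAt g
        ((x s ⬝ᵥ ((Md s + (A s)ᵀ * M s + M s * A s) *ᵥ x s)) * Real.exp (2 * lam * (s - t₀))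
          + V s * (Real.exp (2 * lam * (s - t₀)) * (2 * lam))) s := by
      intro s hs
      have he : HasDerivAt (fun s => Real.exp (2 * lam * (s - t₀)))
          (Real.exp (2 * lam * (s - t₀)) * (2 * lam)) s := by
        have : HasDerivAt (fun s : ℝ => 2 * lam * (s - t₀)) (2 * lam) s := by
          simpa using ((hasDerivAt_id s).sub_const t₀).const_mul (2 * lam)
        simpa using this.exp
      exact (hVderiv s hs).mul he
    have hanti : AntitoneOn g (Set.Ici t₀) := by
      apply antitoneOn_of_deriv_nonpos (convex_Ici t₀)
      · intro s hs
        exact ((hgderiv s hs).continuousAt).continuousWithinAt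
      · intro s hs
        rw [interior_Ici] at hs
        exact (hgderiv s (le_of_lt hs)).differentiableAt.differentiableWithinAt
      · intro s hs
        rw [interior_Ici] at hs
        rw [(hgderiv s (le_of_lt hs)).deriv]
        have h1 := hcontr s (x s)
        have h2 : (x s ⬝ᵥ ((Md s + (A s)ᵀ * M s + M s * A s) *ᵥ x s)) ≤ -2 * lam * V s := h1
        nlinarith [Real.exp_pos (2 * lam * (s - t₀)), h2]
    have hle := hanti (Set.self_mem_Ici) (Set.mem_Ici.2 ht) ht
    simp only [hg, sub_self, mul_zero, Real.exp_zero, mul_one] at hle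
    have hepos : (0:ℝ) < Real.exp (2 * lam * (t - t₀)) := Real.exp_pos _
    rw [show (-2 : ℝ) * lam * (t - t₀) = -(2 * lam * (t - t₀)) by ring, Real.exp_neg,
      ← div_eq_mul_inv, le_div_iff₀ hepos]
    exact hle
  -- conclude
  intro t ht
  have hx0 : (0:ℝ) ≤ x t₀ ⬝ᵥ x t₀ := Finset.sum_nonneg fun i _ => mul_self_nonneg _
  have hxt : (0:ℝ) ≤ x t ⬝ᵥ x t := Finset.sum_nonneg fun i _ => mul_self_nonneg _
  have hq : (0:ℝ) ≤ mbar / m := div_nonneg (hm.trans_le hmmbar).le hm.le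
  have key : x t ⬝ᵥ x t ≤ (mbar / m) * (Real.exp (-lam * (t - t₀)))^2 * (x t₀ ⬝ᵥ x t₀) := by
    have h1 : m * (x t ⬝ᵥ x t) ≤ V t := hlow t (x t)
    have h2 : V t₀ ≤ mbar * (x t₀ ⬝ᵥ x t₀) := hup t₀ (x t₀)
    have h3 := hVdecay t ht
    have hexp : Real.exp (-2 * lam * (t - t₀)) = (Real.exp (-lam * (t - t₀)))^2 := by
      rw [← Real.exp_nat_mul]; ring_nf
    rw [hexp] at h3
    have h4 : V t₀ * (Real.exp (-lam * (t - t₀)))^2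
        ≤ mbar * (x t₀ ⬝ᵥ x t₀) * (Real.exp (-lam * (t - t₀)))^2 :=
      mul_le_mul_of_nonneg_right h2 (sq_nonneg _)
    rw [div_mul_eq_mul_div, div_mul_eq_mul_div, le_div_iff₀ hm]
    nlinarith [h1, h3, h4]
  calc Real.sqrt (x t ⬝ᵥ x t)
      ≤ Real.sqrt ((mbar / m) * (Real.exp (-lam * (t - t₀)))^2 * (x t₀ ⬝ᵥ x t₀)) :=
        Real.sqrt_le_sqrt key
    _ = Real.sqrt (mbar / m) * Real.exp (-lam * (t - t₀)) * Real.sqrt (x t₀ ⬝ᵥ x t₀) := by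
        rw [Real.sqrt_mul (by positivity), Real.sqrt_mul hq,
          Real.sqrt_sq (Real.exp_pos _).le]
end

section
/- Let f : ℝⁿ × ℝ → ℝⁿ be continuously differentiable in x with Jacobian J(x,t) = ∂f/∂x(x,t), let M be a constant symmetric positive definite n×n real matrix, and let λ > 0 be such that ξᵀ(M·J(x,t) + J(x,t)ᵀM)ξ ≤ −2λ·ξᵀMξ for all x ∈ ℝⁿ, t ∈ ℝ, ξ ∈ ℝⁿ. Then the system ẋ = f(x,t) is contracting in the metric M: for any two solutions x(·), y(·) defined on [t₀,∞), (x(t)−y(t))ᵀM(x(t)−y(t)) ≤ e^{−2λ(t−t₀)}·(x(t₀)−y(t₀))ᵀM(x(t₀)−y(t₀)) for all t ≥ t₀. -/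
open Matrix

lemma hasDerivAt_proj' {n : ℕ} {w : ℝ → Fin n → ℝ} {wd : Fin n → ℝ} {s : ℝ}
    (hw : HasDerivAt w wd s) (i : Fin n) : HasDerivAt (fun s => w s i) (wd i) s :=
  (ContinuousLinearMap.proj (R := ℝ) (φ := fun _ : Fin n => ℝ) i).hasFDerivAt.comp_hasDerivAt s hw

lemma hasDerivAt_dot' {n : ℕ} (c : Fin n → ℝ) {w : ℝ → Fin n → ℝ} {wd : Fin n → ℝ} {s : ℝ}
    (hw : HasDerivAt w wd s) : HasDerivAt (fun s => c ⬝ᵥ w s) (c ⬝ᵥ wd) s := by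
  simp only [dotProduct]
  exact HasDerivAt.fun_sum fun i _ => (hasDerivAt_proj' hw i).const_mul (c i)

lemma hasDerivAt_quad' {n : ℕ} (M : Matrix (Fin n) (Fin n) ℝ) {z : ℝ → Fin n → ℝ}
    {zd : Fin n → ℝ} {t : ℝ} (hz : HasDerivAt z zd t) :
    HasDerivAt (fun t => z t ⬝ᵥ (M *ᵥ z t)) (zd ⬝ᵥ (M *ᵥ z t) + z t ⬝ᵥ (M *ᵥ zd)) t := by
  simp only [dotProduct, mulVec]
  rw [← Finset.sum_add_distrib]
  exact HasDerivAt.fun_sum fun i _ => (hasDerivAt_proj' hz i).mul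
    (HasDerivAt.fun_sum fun j _ => (hasDerivAt_proj' hz j).const_mul (M i j))

/-- Mean value bound: for C¹ g with the contraction Jacobian bound, the symmetrized
inner product of g a − g b against a − b is bounded. -/
lemma mvt_bound {n : ℕ} (M : Matrix (Fin n) (Fin n) ℝ) (lam : ℝ)
    (g : (Fin n → ℝ) → (Fin n → ℝ)) (hg : ContDiff ℝ 1 g)
    (hc : ∀ (x ξ : Fin n → ℝ),
      ξ ⬝ᵥ (M *ᵥ (fderiv ℝ g x ξ)) + (fderiv ℝ g x ξ) ⬝ᵥ (M *ᵥ ξ)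
        ≤ -2 * lam * (ξ ⬝ᵥ (M *ᵥ ξ)))
    (a b : Fin n → ℝ) :
    (a - b) ⬝ᵥ (M *ᵥ (g a - g b)) + (g a - g b) ⬝ᵥ (M *ᵥ (a - b))
      ≤ -2 * lam * ((a - b) ⬝ᵥ (M *ᵥ (a - b))) := by
  set z : Fin n → ℝ := a - b with hzdef
  set c : ℝ := -2 * lam * (z ⬝ᵥ (M *ᵥ z)) with hcdef
  -- path
  set p : ℝ → Fin n → ℝ := fun s => b + s • z with hpdef
  have hp : ∀ s : ℝ, HasDerivAt p z s := by
    intro s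
    have : HasDerivAt (fun s : ℝ => s • z) ((1 : ℝ) • z) s := (hasDerivAt_id s).smul_const z
    have h2 := this.const_add b
    rw [one_smul] at h2
    exact h2
  have hgd : Differentiable ℝ g := hg.differentiable one_ne_zero
  set h : ℝ → ℝ := fun s => z ⬝ᵥ (M *ᵥ g (p s)) + g (p s) ⬝ᵥ (M *ᵥ z) with hhdef
  have hh : ∀ s : ℝ, HasDerivAt h
      (z ⬝ᵥ (M *ᵥ (fderiv ℝ g (p s) z)) + (fderiv ℝ g (p s) z) ⬝ᵥ (M *ᵥ z)) s := by
    intro s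
    have hgp : HasDerivAt (fun s => g (p s)) (fderiv ℝ g (p s) z) s :=
      (hgd (p s)).hasFDerivAt.comp_hasDerivAt s (hp s)
    have h1 : HasDerivAt (fun s => z ⬝ᵥ (M *ᵥ g (p s)))
        (z ⬝ᵥ (M *ᵥ (fderiv ℝ g (p s) z))) s := by
      simp only [dotProduct_mulVec]
      exact hasDerivAt_dot' _ hgp
    have h2 : HasDerivAt (fun s => g (p s) ⬝ᵥ (M *ᵥ z))
        ((fderiv ℝ g (p s) z) ⬝ᵥ (M *ᵥ z)) s := by
      simp only [fun w : Fin n → ℝ => dotProduct_comm w (M *ᵥ z)]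
      exact hasDerivAt_dot' _ hgp
    exact h1.add h2
  -- h' ≤ c everywhere, so h 1 - h 0 ≤ c
  have hφ : ∀ s : ℝ, deriv (fun s => h s - c * s) s ≤ 0 := by
    intro s
    have hd : HasDerivAt (fun s => h s - c * s)
        ((z ⬝ᵥ (M *ᵥ (fderiv ℝ g (p s) z)) + (fderiv ℝ g (p s) z) ⬝ᵥ (M *ᵥ z)) - c) s := by
      have := (hh s).sub (((hasDerivAt_id s).const_mul c : HasDerivAt (fun y : ℝ => c * y) (c * 1) s))
      rw [mul_one] at this
      exact this
    rw [hd.deriv]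
    have := hc (p s) z
    linarith
  have hmono : Antitone (fun s => h s - c * s) := by
    apply antitone_of_deriv_nonpos
    · intro s
      have := (hh s).sub (((hasDerivAt_id s).const_mul c : HasDerivAt (fun y : ℝ => c * y) (c * 1) s))
      exact (this.differentiableAt : DifferentiableAt ℝ (fun s => h s - c * s) s)
    · exact hφ
  have := hmono (by norm_num : (0:ℝ) ≤ 1)
  simp only [mul_one, mul_zero, sub_zero] at this
  have h1 : h 1 = z ⬝ᵥ (M *ᵥ g a) + g a ⬝ᵥ (M *ᵥ z) := by
    simp [hhdef, hpdef, hzdef]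
  have h0 : h 0 = z ⬝ᵥ (M *ᵥ g b) + g b ⬝ᵥ (M *ᵥ z) := by
    simp [hhdef, hpdef]
  have expand : z ⬝ᵥ (M *ᵥ (g a - g b)) + (g a - g b) ⬝ᵥ (M *ᵥ z) = h 1 - h 0 := by
    rw [h1, h0]
    simp [Matrix.mulVec_sub, dotProduct_sub, sub_dotProduct]
    ring
  rw [hzdef] at expand ⊢
  rw [expand]
  rw [hcdef, hzdef] at this
  linarith

/-- Contraction in a constant metric: if `M` is a constant symmetric positive definite
matrix and the Jacobian `J (x,t) = ∂f/∂x (x,t)` satisfies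
`ξᵀ (M J + Jᵀ M) ξ ≤ -2 λ ξᵀ M ξ` everywhere, then any two solutions of `ẋ = f (x, t)`
converge exponentially in the weighted norm `‖z‖²_M = zᵀ M z`. -/
theorem contraction_constant_metric
    (n : ℕ) (f : (Fin n → ℝ) → ℝ → (Fin n → ℝ))
    (hf : ∀ t, ContDiff ℝ 1 fun x => f x t)
    (M : Matrix (Fin n) (Fin n) ℝ) (hMsymm : M.IsSymm) (hMpos : M.PosDef)
    (lam : ℝ) (hlam : 0 < lam)
    (hcontr : ∀ (x : Fin n → ℝ) (t : ℝ) (ξ : Fin n → ℝ),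
      ξ ⬝ᵥ (M *ᵥ (fderiv ℝ (fun y => f y t) x ξ))
        + (fderiv ℝ (fun y => f y t) x ξ) ⬝ᵥ (M *ᵥ ξ)
        ≤ -2 * lam * (ξ ⬝ᵥ (M *ᵥ ξ)))
    (t₀ : ℝ) (x y : ℝ → Fin n → ℝ)
    (hx : ∀ t, t₀ ≤ t → HasDerivAt x (f (x t) t) t)
    (hy : ∀ t, t₀ ≤ t → HasDerivAt y (f (y t) t) t) :
    ∀ t, t₀ ≤ t →
      (x t - y t) ⬝ᵥ (M *ᵥ (x t - y t))
        ≤ Real.exp (-2 * lam * (t - t₀)) * ((x t₀ - y t₀) ⬝ᵥ (M *ᵥ (x t₀ - y t₀))) := by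
  intro T hT
  set z : ℝ → Fin n → ℝ := fun t => x t - y t with hz
  set V : ℝ → ℝ := fun t => z t ⬝ᵥ (M *ᵥ z t) with hV
  set V' : ℝ → ℝ := fun t =>
    (f (x t) t - f (y t) t) ⬝ᵥ (M *ᵥ z t) + z t ⬝ᵥ (M *ᵥ (f (x t) t - f (y t) t)) with hV'
  have hzD : ∀ t, t₀ ≤ t → HasDerivAt z (f (x t) t - f (y t) t) t :=
    fun t ht => (hx t ht).sub (hy t ht)
  have hVD : ∀ t, t₀ ≤ t → HasDerivAt V (V' t) t :=
    fun t ht => hasDerivAt_quad' M (hzD t ht)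
  have key := le_gronwallBound_of_liminf_deriv_right_le
    (f := V) (f' := V') (δ := V t₀) (K := -2 * lam) (ε := 0) (a := t₀) (b := T)
    (fun t ht => ((hVD t ht.1).continuousAt.continuousWithinAt))
    (fun t ht r hr => ((hVD t ht.1).hasDerivWithinAt.liminf_right_slope_le hr))
    le_rfl
    (fun t ht => by
      have hb := mvt_bound M lam (fun v => f v t) (hf t) (fun a ξ => hcontr a t ξ) (x t) (y t)
      simp only [hV', hz, add_zero]
      have : (x t - y t) ⬝ᵥ (M *ᵥ (f (x t) t - f (y t) t))
          + (f (x t) t - f (y t) t) ⬝ᵥ (M *ᵥ (x t - y t))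
          ≤ -2 * lam * ((x t - y t) ⬝ᵥ (M *ᵥ (x t - y t))) := by
        simpa using hb
      linarith)
    T ⟨hT, le_rfl⟩
  rw [gronwallBound_ε0] at key
  calc V T ≤ V t₀ * Real.exp (-2 * lam * (T - t₀)) := key
    _ = Real.exp (-2 * lam * (T - t₀)) * ((x t₀ - y t₀) ⬝ᵥ (M *ᵥ (x t₀ - y t₀))) := by
        rw [mul_comm]
end

section
/- Let T₁, T₂ ≥ 0 be delays, let α₁, α₂, a, b : ℝ → ℝ with b differentiable and b(t) > 0, and suppose there is a constant Γ ≥ 0 with |a(t)|·b(t) ≤ Γ for all t. Let δ₁, δ₂ : ℝ → ℝ be differentiable functions satisfying the delayed system δ̇₁(t) = −α₁(t)δ₁(t) + a(t)δ₂(t−T₂) and δ̇₂(t) = −b(t)a(t)δ₁(t−T₁) − α₂(t)δ₂(t). Define the Lyapunov functional V_tot(t) = b(t)δ₁(t)² + δ₂(t)² + Γ·(∫_{t−T₁}^{t} δ₁(σ)² dσ + ∫_{t−T₂}^{t} δ₂(σ)² dσ). Then for all t, V̇_tot(t) ≤ −(2α₁(t)b(t) − b'(t) − 2Γ)·δ₁(t)²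 − 2(α₂(t) − Γ)·δ₂(t)². In particular, if α₁(t) > (b'(t)/2 + Γ)/b(t) and α₂(t) > Γ uniformly, the delayed two-node negative feedback interconnection is contracting for any values of the delays T₁, T₂. -/
private lemma cross_bound (A B G x y : ℝ) (hB : 0 < B) (hG : |A| * B ≤ G) :
    2 * (A * B * (x * y)) ≤ G * (x ^ 2 + y ^ 2) := by
  have hGnn : 0 ≤ G := le_trans (mul_nonneg (abs_nonneg A) hB.le) hG
  have h1 : A * B * (x * y) ≤ |A| * B * |x * y| := by
    calc A * B * (x * y) ≤ |A * B * (x * y)| := le_abs_self _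
      _ = |A| * B * |x * y| := by rw [abs_mul, abs_mul, abs_of_pos hB]
  have h2 : |A| * B * |x * y| ≤ G * |x * y| :=
    mul_le_mul_of_nonneg_right hG (abs_nonneg _)
  have h3 : 2 * |x * y| ≤ x ^ 2 + y ^ 2 := by
    rw [abs_mul]
    nlinarith [sq_nonneg (|x| - |y|), sq_abs x, sq_abs y]
  nlinarith [mul_le_mul_of_nonneg_left h3 hGnn]

private lemma hasDerivAt_sliding (f : ℝ → ℝ) (hf : Continuous f) (T t : ℝ) :
    HasDerivAt (fun u => ∫ σ in (u - T)..u, f σ) (f t - f (t - T)) t := by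
  have key : (fun u => ∫ σ in (u - T)..u, f σ)
      = fun u => (∫ σ in (0:ℝ)..u, f σ) - ∫ σ in (0:ℝ)..(u - T), f σ := by
    funext u
    rw [eq_sub_iff_add_eq, add_comm]
    exact intervalIntegral.integral_add_adjacent_intervals
      (hf.intervalIntegrable _ _) (hf.intervalIntegrable _ _)
  rw [key]
  have hF : ∀ s : ℝ, HasDerivAt (fun u => ∫ σ in (0:ℝ)..u, f σ) (f s) s := fun s =>
    intervalIntegral.integral_hasDerivAt_right (hf.intervalIntegrable _ _)
      (hf.stronglyMeasurableAtFilter _ _) hf.continuousAt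
  have h2 : HasDerivAt (fun u => ∫ σ in (0:ℝ)..(u - T), f σ) (f (t - T)) t := by
    have := (hF (t - T)).comp t ((hasDerivAt_id t).sub_const T)
    simpa [Function.comp_def] using this
  exact (hF t).sub h2

/-- Delayed two-node negative feedback interconnection (Example 3): with the Lyapunov
functional
`V_tot t = b t δ₁ t ² + δ₂ t ² + Γ (∫_{t-T₁}^t δ₁² + ∫_{t-T₂}^t δ₂²)`,
along the delayed system one has
`V̇_tot t ≤ -(2 α₁ b - b' - 2Γ) δ₁ t ² - 2 (α₂ - Γ) δ₂ t ²`, for any delays `T₁, T₂ ≥ 0`. -/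
theorem delayed_two_node_feedback_lyapunov
    (T₁ T₂ : ℝ) (hT₁ : 0 ≤ T₁) (hT₂ : 0 ≤ T₂)
    (α₁ α₂ a b : ℝ → ℝ) (hb : Differentiable ℝ b) (hbpos : ∀ t, 0 < b t)
    (Γ : ℝ) (hΓ : 0 ≤ Γ) (hbound : ∀ t, |a t| * b t ≤ Γ)
    (δ₁ δ₂ : ℝ → ℝ)
    (hδ₁ : ∀ t, HasDerivAt δ₁ (-α₁ t * δ₁ t + a t * δ₂ (t - T₂)) t)
    (hδ₂ : ∀ t, HasDerivAt δ₂ (-(b t) * a t * δ₁ (t - T₁) - α₂ t * δ₂ t) t)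
    (V : ℝ → ℝ)
    (hV : ∀ t, V t = b t * (δ₁ t) ^ 2 + (δ₂ t) ^ 2
      + Γ * ((∫ σ in (t - T₁)..t, (δ₁ σ) ^ 2) + (∫ σ in (t - T₂)..t, (δ₂ σ) ^ 2))) :
    ∀ t : ℝ, ∃ v : ℝ, HasDerivAt V v t ∧
      v ≤ -(2 * α₁ t * b t - deriv b t - 2 * Γ) * (δ₁ t) ^ 2
          - 2 * (α₂ t - Γ) * (δ₂ t) ^ 2 := by
  have hVeq : V = fun t => b t * (δ₁ t) ^ 2 + (δ₂ t) ^ 2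
      + Γ * ((∫ σ in (t - T₁)..t, (δ₁ σ) ^ 2) + (∫ σ in (t - T₂)..t, (δ₂ σ) ^ 2)) :=
    funext hV
  subst hVeq
  intro t
  have hD1 : Differentiable ℝ δ₁ := fun s => (hδ₁ s).differentiableAt
  have hD2 : Differentiable ℝ δ₂ := fun s => (hδ₂ s).differentiableAt
  have hc1 : Continuous (fun σ => (δ₁ σ) ^ 2) := hD1.continuous.pow 2
  have hc2 : Continuous (fun σ => (δ₂ σ) ^ 2) := hD2.continuous.pow 2
  have hI1 := hasDerivAt_sliding _ hc1 T₁ t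
  have hI2 := hasDerivAt_sliding _ hc2 T₂ t
  have hd1 : HasDerivAt (fun u => (δ₁ u) ^ 2)
      (2 * δ₁ t ^ 1 * (-α₁ t * δ₁ t + a t * δ₂ (t - T₂))) t := (hδ₁ t).pow 2
  have hd2 : HasDerivAt (fun u => (δ₂ u) ^ 2)
      (2 * δ₂ t ^ 1 * (-(b t) * a t * δ₁ (t - T₁) - α₂ t * δ₂ t)) t := (hδ₂ t).pow 2
  have hder := (((hb t).hasDerivAt.mul hd1).add hd2).add ((hI1.add hI2).const_mul Γ)
  refine ⟨_, hder, ?_⟩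
  have hcross1 : 2 * (a t * b t * (δ₁ t * δ₂ (t - T₂))) ≤ Γ * (δ₁ t ^ 2 + δ₂ (t - T₂) ^ 2) :=
    cross_bound _ _ _ _ _ (hbpos t) (hbound t)
  have hcross2 : 2 * (a t * b t * (δ₁ (t - T₁) * (-(δ₂ t)))) ≤
      Γ * (δ₁ (t - T₁) ^ 2 + (-(δ₂ t)) ^ 2) :=
    cross_bound _ _ _ _ _ (hbpos t) (hbound t)
  nlinarith [hcross1, hcross2]
end

section
/- Let α ∈ ℝ and let b : ℝ → ℝ be differentiable with b(t) > 0 for all t. Define A(t) = [[−α, 1], [−b(t), −α]] and the coordinate change Θ(t) = diag(1, b(t)^{−1/2}). Then the transformed Jacobian F(t) = Θ(t)A(t)Θ(t)⁻¹ + Θ'(t)Θ(t)⁻¹ equals [[−α, √b(t)], [−√b(t), −α − b'(t)/(2b(t))]], and in particular F(t) + F(t)ᵀ = diag(−2α, −2α − b'(t)/b(t)) is diagonal: the change of coordinates Θ renders the off-diagonal part of the transformed Jacobian skew-symmetric, so that stability is determined by the diagonal entries −2α and −2α − b'/b. -/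
open Matrix

/-- Change of coordinates for the two-node feedback with time-varying asymmetry
(Example 4): with `A t = !![-α, 1; -b t, -α]` and `Θ t = diag (1, b t ^ (-1/2))`, the
transformed Jacobian `F = Θ A Θ⁻¹ + Θ' Θ⁻¹` equals
`!![-α, √(b t); -√(b t), -α - b' t / (2 b t)]`, whose symmetric part
`F + Fᵀ = diag (-2α, -2α - b' t / b t)` is diagonal. -/
theorem two_node_feedback_coordinate_change
    (α : ℝ) (b : ℝ → ℝ) (hb : Differentiable ℝ b) (hbpos : ∀ t, 0 < b t)
    (A Θ F : ℝ → Matrix (Fin 2) (Fin 2) ℝ)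
    (hA : ∀ t, A t = !![-α, 1; -b t, -α])
    (hΘ : ∀ t, Θ t = !![1, 0; 0, (Real.sqrt (b t))⁻¹])
    (hF : ∀ t, F t = Θ t * A t * (Θ t)⁻¹
      + (Matrix.of fun i j => deriv (fun s => Θ s i j) t) * (Θ t)⁻¹) :
    ∀ t : ℝ,
      F t = !![-α, Real.sqrt (b t); -Real.sqrt (b t), -α - deriv b t / (2 * b t)] ∧
      F t + (F t)ᵀ = !![-2 * α, 0; 0, -2 * α - deriv b t / b t] := by
  intro t
  have hbt := hbpos t
  have hst : 0 < Real.sqrt (b t) := Real.sqrt_pos.mpr hbt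
  have hsne : Real.sqrt (b t) ≠ 0 := ne_of_gt hst
  have hbne : b t ≠ 0 := ne_of_gt hbt
  have hsq : Real.sqrt (b t) * Real.sqrt (b t) = b t := Real.mul_self_sqrt hbt.le
  have hinv : (Θ t)⁻¹ = !![1, 0; 0, Real.sqrt (b t)] := by
    apply Matrix.inv_eq_right_inv
    rw [hΘ]
    ext i j
    fin_cases i <;> fin_cases j <;>
      simp [Matrix.mul_apply, Fin.sum_univ_two, inv_mul_cancel₀ hsne]
  have hd11 : HasDerivAt (fun s => (Real.sqrt (b s))⁻¹)
      (-(1 / (2 * Real.sqrt (b t)) * deriv b t) / (Real.sqrt (b t)) ^ 2) t := by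
    have h1 : HasDerivAt (fun s => Real.sqrt (b s))
        (1 / (2 * Real.sqrt (b t)) * deriv b t) t :=
      (Real.hasDerivAt_sqrt hbne).comp t (hb t).hasDerivAt
    exact h1.inv hsne
  have hderivmat : (Matrix.of fun i j => deriv (fun s => Θ s i j) t)
      = !![0, 0; 0, -(1 / (2 * Real.sqrt (b t)) * deriv b t) / (Real.sqrt (b t)) ^ 2] := by
    ext i j
    fin_cases i <;> fin_cases j <;> simp only [Matrix.of_apply, hΘ] <;>
      simp [hd11.deriv]
  have hFt : F t = !![-α, Real.sqrt (b t); -Real.sqrt (b t), -α - deriv b t / (2 * b t)] := by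
    rw [hF, hinv, hA, hΘ, hderivmat]
    ext i j
    fin_cases i <;> fin_cases j <;>
      simp [Matrix.mul_apply, Fin.sum_univ_two] <;>
      field_simp <;> ring_nf <;>
      rw [Real.sq_sqrt hbt.le] <;> ring
  refine ⟨hFt, ?_⟩
  rw [hFt]
  have htr : (!![-α, Real.sqrt (b t); -Real.sqrt (b t), -α - deriv b t / (2 * b t)])ᵀ
      = !![-α, -Real.sqrt (b t); Real.sqrt (b t), -α - deriv b t / (2 * b t)] := by
    ext i j; fin_cases i <;> fin_cases j <;> rfl
  rw [htr]
  ext i j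
  fin_cases i <;> fin_cases j <;>
    · simp only [Matrix.add_apply, Matrix.cons_val', Matrix.cons_val_zero, Matrix.cons_val_one,
        Matrix.head_cons, Matrix.empty_val', Matrix.cons_val_fin_one, Matrix.head_fin_const]
      simp
      try field_simp
      try ring
end

section
/- Let n₁, n₂ ≥ 1, let A₁₁ : ℝ → Matrix n₁×n₁ ℝ, A₂₂ : ℝ → Matrix n₂×n₂ ℝ, A₁₂ : ℝ → Matrix n₁×n₂ ℝ, let b : ℝ → ℝ be differentiable with b(t) > 0, and let M₁ : ℝ → Matrix n₁×n₁ ℝ, M₂ : ℝ → Matrix n₂×n₂ ℝ be differentiable symmetric matrix functions satisfying the metric compatibility condition M₁(t)A₁₂(t) = A₁₂(t)M₂(t) for all t. Define the block matrices A(t) = [[A₁₁(t), A₁₂(t)], [−b(t)·A₁₂(t)ᵀ, A₂₂(t)]] and M(t) = blkdiag(b(t)·M₁(t), M₂(t)). Then for every t, M'(t) + A(t)ᵀM(t) + M(t)A(t) = blkdiag( b(t)·[L(A₁₁,M₁)(t) + (b'(t)/b(t))·M₁(t)], L(A₂₂,M₂)(t) ), where L(A_{ii},M_i) = M_i' + A_{ii}ᵀM_i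 + M_iA_{ii}. Consequently, if in addition M₁(t), M₂(t) are positive definite, L(A₁₁,M₁)(t) + (b'(t)/b(t))·M₁(t) is negative definite, and L(A₂₂,M₂)(t) is negative definite for all t, then M'(t) + A(t)ᵀM(t) + M(t)A(t) is negative definite for all t, so a negative feedback interconnection of two contracting modules with compatible metrics is contracting. -/
open Matrix

/-- Negative feedback interconnection of two modules with compatible metrics (Section
IV-C): with `A = [[A₁₁, A₁₂], [-b A₁₂ᵀ, A₂₂]]` and `M = blkdiag (b M₁, M₂)`, if
`M₁ A₁₂ = A₁₂ M₂`, then `M' + Aᵀ M + M A = blkdiag (b (L(A₁₁,M₁) + (b'/b) M₁), L(A₂₂,M₂))`;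
consequently, if moreover `M₁, M₂ ≻ 0`, `L(A₁₁,M₁) + (b'/b) M₁ ≺ 0` and `L(A₂₂,M₂) ≺ 0`,
then `M' + Aᵀ M + M A ≺ 0`. -/
theorem module_feedback_interconnection
    (n₁ n₂ : ℕ) (hn₁ : 1 ≤ n₁) (hn₂ : 1 ≤ n₂)
    (A₁₁ : ℝ → Matrix (Fin n₁) (Fin n₁) ℝ) (A₂₂ : ℝ → Matrix (Fin n₂) (Fin n₂) ℝ)
    (A₁₂ : ℝ → Matrix (Fin n₁) (Fin n₂) ℝ)
    (b : ℝ → ℝ) (hb : Differentiable ℝ b) (hbpos : ∀ t, 0 < b t)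
    (M₁ : ℝ → Matrix (Fin n₁) (Fin n₁) ℝ) (M₂ : ℝ → Matrix (Fin n₂) (Fin n₂) ℝ)
    (hM₁d : ∀ i j, Differentiable ℝ fun t => M₁ t i j)
    (hM₂d : ∀ i j, Differentiable ℝ fun t => M₂ t i j)
    (hM₁s : ∀ t, (M₁ t).IsSymm) (hM₂s : ∀ t, (M₂ t).IsSymm)
    (hcompat : ∀ t, M₁ t * A₁₂ t = A₁₂ t * M₂ t)
    (A M : ℝ → Matrix (Fin n₁ ⊕ Fin n₂) (Fin n₁ ⊕ Fin n₂) ℝ)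
    (hA : ∀ t, A t = Matrix.fromBlocks (A₁₁ t) (A₁₂ t) (-(b t) • (A₁₂ t)ᵀ) (A₂₂ t))
    (hM : ∀ t, M t = Matrix.fromBlocks (b t • M₁ t) 0 0 (M₂ t)) :
    (∀ t : ℝ,
      (Matrix.of fun p q => deriv (fun s => M s p q) t) + (A t)ᵀ * M t + M t * A t
        = Matrix.fromBlocks
            (b t • (((Matrix.of fun i j => deriv (fun s => M₁ s i j) t)
                      + (A₁₁ t)ᵀ * M₁ t + M₁ t * A₁₁ t)
                    + (deriv b t / b t) • M₁ t))
            0 0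
            ((Matrix.of fun i j => deriv (fun s => M₂ s i j) t)
              + (A₂₂ t)ᵀ * M₂ t + M₂ t * A₂₂ t)) ∧
    ((∀ t, (M₁ t).PosDef) → (∀ t, (M₂ t).PosDef) →
      (∀ t, ∀ ξ : Fin n₁ → ℝ, ξ ≠ 0 →
        ξ ⬝ᵥ (((((Matrix.of fun i j => deriv (fun s => M₁ s i j) t)
                  + (A₁₁ t)ᵀ * M₁ t + M₁ t * A₁₁ t)
                + (deriv b t / b t) • M₁ t)) *ᵥ ξ) < 0) →
      (∀ t, ∀ ξ : Fin n₂ → ℝ, ξ ≠ 0 →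
        ξ ⬝ᵥ ((((Matrix.of fun i j => deriv (fun s => M₂ s i j) t)
                + (A₂₂ t)ᵀ * M₂ t + M₂ t * A₂₂ t)) *ᵥ ξ) < 0) →
      ∀ t, ∀ ξ : (Fin n₁ ⊕ Fin n₂) → ℝ, ξ ≠ 0 →
        ξ ⬝ᵥ ((((Matrix.of fun p q => deriv (fun s => M s p q) t)
                + (A t)ᵀ * M t + M t * A t)) *ᵥ ξ) < 0) := by
  have key : ∀ t : ℝ,
      (Matrix.of fun p q => deriv (fun s => M s p q) t) + (A t)ᵀ * M t + M t * A t
        = Matrix.fromBlocks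
            (b t • (((Matrix.of fun i j => deriv (fun s => M₁ s i j) t)
                      + (A₁₁ t)ᵀ * M₁ t + M₁ t * A₁₁ t)
                    + (deriv b t / b t) • M₁ t))
            0 0
            ((Matrix.of fun i j => deriv (fun s => M₂ s i j) t)
              + (A₂₂ t)ᵀ * M₂ t + M₂ t * A₂₂ t) := by
    intro t
    have hbne : b t ≠ 0 := (hbpos t).ne'
    have hderiv : (Matrix.of fun p q => deriv (fun s => M s p q) t)
        = Matrix.fromBlocks
            (deriv b t • M₁ t + b t • (Matrix.of fun i j => deriv (fun s => M₁ s i j) t))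
            0 0 (Matrix.of fun i j => deriv (fun s => M₂ s i j) t) := by
      ext p q
      rcases p with i | i <;> rcases q with j | j <;>
        simp only [Matrix.of_apply, Matrix.fromBlocks_apply₁₁, Matrix.fromBlocks_apply₁₂,
          Matrix.fromBlocks_apply₂₁, Matrix.fromBlocks_apply₂₂, Matrix.add_apply,
          Matrix.smul_apply, Matrix.zero_apply, smul_eq_mul]
      · have : (fun s => M s (Sum.inl i) (Sum.inl j)) = fun s => b s * M₁ s i j := by
          funext s; rw [hM s]; simp
        rw [this, deriv_fun_mul (hb t) (hM₁d i j t)]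
      · have : (fun s => M s (Sum.inl i) (Sum.inr j)) = fun _ => (0 : ℝ) := by
          funext s; rw [hM s]; simp
        rw [this]; simp
      · have : (fun s => M s (Sum.inr i) (Sum.inl j)) = fun _ => (0 : ℝ) := by
          funext s; rw [hM s]; simp
        rw [this]; simp
      · congr 1; funext s; rw [hM s]; simp
    rw [hderiv, hA, hM, Matrix.fromBlocks_transpose, Matrix.fromBlocks_multiply,
      Matrix.fromBlocks_multiply, Matrix.fromBlocks_add, Matrix.fromBlocks_add]
    have hcompatT : (A₁₂ t)ᵀ * M₁ t = M₂ t * (A₁₂ t)ᵀ := by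
      have := congrArg Matrix.transpose (hcompat t)
      rwa [Matrix.transpose_mul, Matrix.transpose_mul, (hM₁s t).eq, (hM₂s t).eq] at this
    rw [Matrix.fromBlocks_inj]
    refine ⟨?_, ?_, ?_, ?_⟩
    · rw [smul_add, smul_add, smul_smul, mul_div_cancel₀ _ hbne, smul_add]
      simp only [Matrix.mul_zero, Matrix.zero_mul, smul_zero, add_zero, zero_add,
        Matrix.mul_smul, Matrix.smul_mul]
      abel
    · simp [Matrix.transpose_smul, Matrix.smul_mul, Matrix.mul_smul, hcompat t, smul_smul]
    · simp [Matrix.smul_mul, Matrix.mul_smul, hcompatT, smul_smul]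
    · simp
  refine ⟨key, ?_⟩
  intro _ _ h₁ h₂ t ξ hξ
  rw [key t]
  have hξe : ξ = Sum.elim (ξ ∘ Sum.inl) (ξ ∘ Sum.inr) := by
    funext p; cases p <;> rfl
  rw [hξe, Matrix.fromBlocks_mulVec, sumElim_dotProduct_sumElim]
  simp only [Sum.elim_comp_inl, Sum.elim_comp_inr, Matrix.zero_mulVec, add_zero, zero_add, Matrix.smul_mulVec,
    dotProduct_smul, smul_eq_mul]
  set D₁ := ((Matrix.of fun i j => deriv (fun s => M₁ s i j) t)
      + (A₁₁ t)ᵀ * M₁ t + M₁ t * A₁₁ t) + (deriv b t / b t) • M₁ t with hD₁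
  set D₂ := (Matrix.of fun i j => deriv (fun s => M₂ s i j) t)
      + (A₂₂ t)ᵀ * M₂ t + M₂ t * A₂₂ t with hD₂
  set x₁ := ξ ∘ Sum.inl
  set x₂ := ξ ∘ Sum.inr
  have hcases : x₁ ≠ 0 ∨ x₂ ≠ 0 := by
    by_contra h
    push_neg at h
    apply hξ
    funext p; cases p with
    | inl i => exact congrFun h.1 i
    | inr i => exact congrFun h.2 i
  have ht1 : b t * (x₁ ⬝ᵥ (D₁ *ᵥ x₁)) ≤ 0 := by
    by_cases h : x₁ = 0
    · rw [h]; simp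
    · exact le_of_lt (mul_neg_of_pos_of_neg (hbpos t) (h₁ t _ h))
  have ht2 : x₂ ⬝ᵥ (D₂ *ᵥ x₂) ≤ 0 := by
    by_cases h : x₂ = 0
    · rw [h]; simp
    · exact le_of_lt (h₂ t _ h)
  rcases hcases with h | h
  · have := mul_neg_of_pos_of_neg (hbpos t) (h₁ t x₁ h)
    linarith
  · have := h₂ t x₂ h
    linarith
end

section
/- Consider the system on ℝ³ given by ẋ₁ = −x₁ − x₁x₂, ẋ₂ = x₁² − x₂ − x₂x₃, ẋ₃ = x₂² − x₃, with Jacobian J(x) = [[−1−x₂, −x₁, 0], [2x₁, −1−x₃, −x₂], [0, 2x₂, −1]], and let D = diag(2, 1, 1/2). Then for every x ∈ ℝ³, D·J(x) + J(x)ᵀ·D = diag(−4(1+x₂), −2(1+x₃), −1); in particular, for every x in the region Ω = {x ∈ ℝ³ : x₂ > −1 and x₃ > −1}, the matrix D·J(x) + J(x)ᵀ·D is negative definite, so the system is sign-stable (diagonally contracting) in Ω. -/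
open Matrix

/-- Example 1: the system `ẋ₁ = -x₁ - x₁x₂`, `ẋ₂ = x₁² - x₂ - x₂x₃`, `ẋ₃ = x₂² - x₃` with
Jacobian `J x` and constant diagonal metric `D = diag (2, 1, 1/2)` satisfies
`D J x + (J x)ᵀ D = diag (-4 (1 + x₂), -2 (1 + x₃), -1)`; in particular this matrix is
negative definite on the region `Ω = {x : x₂ > -1, x₃ > -1}`, so the system is
sign-stable (diagonally contracting) in `Ω`. -/
theorem example_system_sign_stable
    (f : (Fin 3 → ℝ) → (Fin 3 → ℝ))
    (hf : ∀ x : Fin 3 → ℝ,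
      f x = ![-x 0 - x 0 * x 1, (x 0) ^ 2 - x 1 - x 1 * x 2, (x 1) ^ 2 - x 2])
    (J : (Fin 3 → ℝ) → Matrix (Fin 3) (Fin 3) ℝ)
    (hJ : ∀ x : Fin 3 → ℝ,
      J x = !![-1 - x 1, -x 0, 0; 2 * x 0, -1 - x 2, -x 1; 0, 2 * x 1, -1])
    (D : Matrix (Fin 3) (Fin 3) ℝ)
    (hD : D = !![2, 0, 0; 0, 1, 0; 0, 0, 1 / 2]) :
    (∀ x : Fin 3 → ℝ,
      D * J x + (J x)ᵀ * D
        = !![-4 * (1 + x 1), 0, 0; 0, -2 * (1 + x 2), 0; 0, 0, -1]) ∧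
    (∀ x : Fin 3 → ℝ, x 1 > -1 → x 2 > -1 →
      ∀ ξ : Fin 3 → ℝ, ξ ≠ 0 → ξ ⬝ᵥ ((D * J x + (J x)ᵀ * D) *ᵥ ξ) < 0) := by
  have key : ∀ x : Fin 3 → ℝ,
      D * J x + (J x)ᵀ * D
        = !![-4 * (1 + x 1), 0, 0; 0, -2 * (1 + x 2), 0; 0, 0, -1] := by
    intro x
    rw [hJ, hD]
    ext i j
    fin_cases i <;> fin_cases j <;>
      simp [Matrix.mul_apply, Fin.sum_univ_succ, Matrix.transpose_apply,
        Matrix.vecHead, Matrix.vecTail] <;> ring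
  refine ⟨key, ?_⟩
  intro x h1 h2 ξ hξ
  rw [key x]
  have hq : ξ ⬝ᵥ ((!![-4 * (1 + x 1), 0, 0; 0, -2 * (1 + x 2), 0; 0, 0, -1] : Matrix (Fin 3) (Fin 3) ℝ) *ᵥ ξ)
      = -4 * (1 + x 1) * (ξ 0)^2 + (-2 * (1 + x 2)) * (ξ 1)^2 + (-1) * (ξ 2)^2 := by
    simp [dotProduct, Matrix.mulVec, Fin.sum_univ_succ]
    ring
  rw [hq]
  have h1' : (0:ℝ) < 1 + x 1 := by linarith
  have h2' : (0:ℝ) < 1 + x 2 := by linarith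
  have hne : ξ 0 ≠ 0 ∨ ξ 1 ≠ 0 ∨ ξ 2 ≠ 0 := by
    by_contra h
    push_neg at h
    apply hξ
    funext i
    fin_cases i <;> simp [h.1, h.2.1, h.2.2]
  have e0 : (0:ℝ) ≤ (ξ 0)^2 := sq_nonneg _
  have e1 : (0:ℝ) ≤ (ξ 1)^2 := sq_nonneg _
  have e2 : (0:ℝ) ≤ (ξ 2)^2 := sq_nonneg _
  rcases hne with h | h | h
  · have hp : (0:ℝ) < (ξ 0)^2 := by positivity
    nlinarith
  · have hp : (0:ℝ) < (ξ 1)^2 := by positivity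
    nlinarith
  · have hp : (0:ℝ) < (ξ 2)^2 := by positivity
    nlinarith
end
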